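/- arXiv:0710.5277 — 3 statements merged into one kernel-verified Lean document; each statement's English description precedes it below -/
import Mathlib

section
/- Let n and m be positive integers and let E > 1 be a squarefree integer. If the subfield of ℝ generated over ℚ by 2·cos(2π/n) and 2·cos(2π/m) equals ℚ(√E), then E ∈ {2, 3, 5}. -/
/-!
If `ζ = e^{2πi/n}`, then `ζ` satisfies `X² - (ζ + ζ⁻¹) X + 1` over `ℚ(ζ + ζ⁻¹)`, so
`φ(n) = [ℚ(ζ) : ℚ] ≤ 2 [ℚ(2cos(2π/n)) : ℚ]`. Both generators of the trace field lie in the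
quadratic field `ℚ(√E)`, hence `φ(n), φ(m) ≤ 4`, which leaves
`n, m ∈ {1, 2, 3, 4, 5, 6, 8, 10, 12}`.
For these, `2cos(2π/n)` is rational or of the form `r + s√p` with `s ≠ 0` and `p ∈ {2, 3, 5}`.
The generators cannot both be rational since `√E` is irrational, so some `√p` lies in `ℚ(√E)`,
and comparing `(a + b√E)² = p` forces `p = E`.
-/

open Polynomial IntermediateField Module Real

section QuadraticRoot

variable {K L : Type*} [Field K] [Field L] [Algebra K L] {α : L} {c : K}

theorem isIntegral_of_sq_eq_algebraMap (hα : α ^ 2 = algebraMap K L c) : IsIntegral K α :=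
  ⟨X ^ 2 - C c, monic_X_pow_sub_C c two_ne_zero, by simp [hα]⟩

theorem natDegree_minpoly_le_two_of_sq_eq_algebraMap (hα : α ^ 2 = algebraMap K L c) :
    (minpoly K α).natDegree ≤ 2 :=
  (natDegree_le_of_dvd (minpoly.dvd K α (by simp [hα]))
    (monic_X_pow_sub_C c two_ne_zero).ne_zero).trans natDegree_X_pow_sub_C.le

theorem exists_eq_add_mul_of_mem_adjoin_of_sq_eq_algebraMap (hα : α ^ 2 = algebraMap K L c)
    {x : L} (hx : x ∈ K⟮α⟯) : ∃ a b : K, x = algebraMap K L a + algebraMap K L b * α := by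
  have hint := isIntegral_of_sq_eq_algebraMap hα
  let pb := adjoin.powerBasis hint
  obtain ⟨f, hdeg, hf⟩ := pb.exists_eq_aeval ⟨x, hx⟩
  have hf1 : f.natDegree ≤ 1 := by
    have := natDegree_minpoly_le_two_of_sq_eq_algebraMap hα
    simp only [pb, adjoin.powerBasis_dim] at hdeg
    omega
  refine ⟨f.coeff 0, f.coeff 1, ?_⟩
  have := congrArg (algebraMap K⟮α⟯ L) hf
  rw [eq_X_add_C_of_natDegree_le_one hf1] at this
  simpa [pb, add_comm] using this

end QuadraticRoot

theorem IntermediateField.finrank_adjoin_le_two_mul_of_add_inv_mem {F L : Type*} [Field F]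
    [Field L] [Algebra F L] {K : IntermediateField F L} [FiniteDimensional F K] {ζ : L}
    (hζ0 : ζ ≠ 0) (hK : ζ + ζ⁻¹ ∈ K) : finrank F F⟮ζ⟯ ≤ 2 * finrank F K := by
  let q : K[X] := X ^ 2 - C ⟨ζ + ζ⁻¹, hK⟩ * X + 1
  have hq : q.Monic := by simp only [q]; monicity!
  have hroot : aeval ζ q = 0 := by
    have : ζ ^ 2 - (ζ + ζ⁻¹) * ζ + 1 = 0 := by field_simp; ring
    simpa [q] using this
  have hζK : IsIntegral K ζ := ⟨q, hq, by rwa [← aeval_def]⟩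
  have hdeg : finrank K K⟮ζ⟯ ≤ 2 := by
    rw [adjoin.finrank hζK]
    refine (natDegree_le_of_dvd (minpoly.dvd _ ζ hroot) hq.ne_zero).trans ?_
    simp only [q]
    compute_degree!
  have : FiniteDimensional K K⟮ζ⟯ := adjoin.finiteDimensional hζK
  have : FiniteDimensional F (K⟮ζ⟯.restrictScalars F) := FiniteDimensional.trans F K K⟮ζ⟯
  have : Module.Free K K⟮ζ⟯ := Module.Free.of_divisionRing K K⟮ζ⟯
  calc finrank F F⟮ζ⟯ ≤ finrank F (K⟮ζ⟯.restrictScalars F) :=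
        finrank_le_of_le_right (adjoin_simple_le_iff.mpr (mem_adjoin_simple_self _ ζ))
    _ = finrank F K * finrank K K⟮ζ⟯ := (Module.finrank_mul_finrank F K K⟮ζ⟯).symm
    _ ≤ 2 * finrank F K := by rw [mul_comm]; exact Nat.mul_le_mul_right _ hdeg

theorem Complex.exp_add_exp_inv_eq_two_cos (n : ℕ) :
    Complex.exp (2 * π * Complex.I / n) + (Complex.exp (2 * π * Complex.I / n))⁻¹ =
      ((2 * Real.cos (2 * π / n) : ℝ) : ℂ) := by
  push_cast
  rw [Complex.two_cos, ← Complex.exp_neg]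
  ring_nf

theorem Nat.totient_le_two_mul_finrank_of_two_cos_mem {n : ℕ} (hn : 0 < n)
    {K : IntermediateField ℚ ℝ} [FiniteDimensional ℚ K]
    (h : 2 * cos (2 * π / n) ∈ K) : n.totient ≤ 2 * finrank ℚ K := by
  let f : ℝ →ₐ[ℚ] ℂ := Complex.ofRealAm.restrictScalars ℚ
  let e := K.equivMap f
  have : FiniteDimensional ℚ (K.map f) := e.toLinearEquiv.finiteDimensional
  have hζ := Complex.isPrimitiveRoot_exp n hn.ne'
  calc n.totient = finrank ℚ ℚ⟮Complex.exp (2 * π * Complex.I / n)⟯ := by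
        rw [adjoin.finrank (hζ.isIntegral hn).tower_top, ← cyclotomic_eq_minpoly_rat hζ hn,
          natDegree_cyclotomic]
    _ ≤ 2 * finrank ℚ (K.map f) := by
        refine finrank_adjoin_le_two_mul_of_add_inv_mem (hζ.ne_zero hn.ne') ?_
        rw [Complex.exp_add_exp_inv_eq_two_cos]
        exact (K.mem_map).mpr ⟨_, h, rfl⟩
    _ = 2 * finrank ℚ K := by rw [e.toLinearEquiv.finrank_eq]

theorem Nat.Prime.pow_dvd_120_of_totient_le_four {p k : ℕ} (hp : p.Prime)
    (h : (p ^ k).totient ≤ 4) : p ^ k ∣ 120 := by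
  rcases k.eq_zero_or_pos with rfl | hk
  · simp
  rw [totient_prime_pow hp hk] at h
  have hp5 : p ≤ 5 := by
    have := Nat.le_mul_of_pos_left (p - 1) (pow_pos hp.pos (k - 1))
    omega
  have hk3 : k ≤ 3 := by
    have : 2 ^ (k - 1) ≤ 4 := (Nat.pow_le_pow_left hp.two_le _).trans
      (le_of_mul_le_of_one_le_left h (by have := hp.two_le; omega))
    have : k - 1 < 3 := (Nat.pow_lt_pow_iff_right (by norm_num : 1 < 2)).mp (by omega)
    omega
  interval_cases p <;> interval_cases k <;> simp_all <;> norm_num at hp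

theorem Nat.dvd_120_of_totient_le_four {n : ℕ} (hn : 0 < n) (h : n.totient ≤ 4) : n ∣ 120 :=
  (dvd_iff_prime_pow_dvd_dvd 120 n).mpr fun _ _ hp hdvd =>
    hp.pow_dvd_120_of_totient_le_four
      ((Nat.le_of_dvd (totient_pos.mpr hn) (totient_dvd_of_dvd hdvd)).trans h)

theorem Nat.mem_of_totient_le_four {n : ℕ} (hn : 0 < n) (h : n.totient ≤ 4) :
    n ∈ ({1, 2, 3, 4, 5, 6, 8, 10, 12} : Finset ℕ) := by
  have key : ∀ d ∈ Nat.divisors 120, d.totient ≤ 4 →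
      d ∈ ({1, 2, 3, 4, 5, 6, 8, 10, 12} : Finset ℕ) := by decide
  exact key n (Nat.mem_divisors.mpr ⟨dvd_120_of_totient_le_four hn h, by norm_num⟩) h

theorem two_cos_two_pi_div_eq_add_mul_sqrt {n : ℕ}
    (hn : n ∈ ({1, 2, 3, 4, 5, 6, 8, 10, 12} : Finset ℕ)) :
    ∃ p ∈ ({2, 3, 5} : Finset ℕ), ∃ r s : ℚ, 2 * cos (2 * π / n) = r + s * √p := by
  have h5 : √5 ^ 2 = 5 := sq_sqrt (by norm_num)
  simp only [Finset.mem_insert, Finset.mem_singleton] at hn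
  rcases hn with rfl | rfl | rfl | rfl | rfl | rfl | rfl | rfl | rfl
  · exact ⟨2, by simp, 2, 0, by simp⟩
  · exact ⟨2, by simp, -2, 0, by norm_num⟩
  · refine ⟨2, by simp, -1, 0, ?_⟩
    rw [show 2 * π / (3 : ℕ) = π - π / 3 by push_cast; ring, cos_pi_sub, cos_pi_div_three]
    norm_num
  · refine ⟨2, by simp, 0, 0, ?_⟩
    rw [show 2 * π / (4 : ℕ) = π / 2 by push_cast; ring, cos_pi_div_two]
    norm_num
  · refine ⟨5, by simp, -1 / 2, 1 / 2, ?_⟩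
    rw [show 2 * π / (5 : ℕ) = 2 * (π / 5) by push_cast; ring, cos_two_mul, cos_pi_div_five]
    push_cast
    linear_combination (1 / 4 : ℝ) * h5
  · refine ⟨2, by simp, 1, 0, ?_⟩
    rw [show 2 * π / (6 : ℕ) = π / 3 by push_cast; ring, cos_pi_div_three]
    norm_num
  · refine ⟨2, by simp, 0, 1, ?_⟩
    rw [show 2 * π / (8 : ℕ) = π / 4 by push_cast; ring, cos_pi_div_four]
    push_cast
    ring
  · refine ⟨5, by simp, 1 / 2, 1 / 2, ?_⟩
    rw [show 2 * π / (10 : ℕ) = π / 5 by push_cast; ring, cos_pi_div_five]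
    push_cast
    ring
  · refine ⟨3, by simp, 0, 1, ?_⟩
    rw [show 2 * π / (12 : ℕ) = π / 6 by push_cast; ring, cos_pi_div_six]
    push_cast
    ring

theorem Nat.irrational_sqrt_of_squarefree {E : ℕ} (hE : 1 < E) (hsf : Squarefree E) :
    Irrational √E := by
  refine irrational_sqrt_natCast_iff.mpr ?_
  rintro ⟨k, rfl⟩
  obtain rfl : k = 1 := Nat.isUnit_iff.mp (hsf k ⟨1, by ring⟩)
  omega

theorem Nat.Prime.eq_of_isSquare_mul {p E : ℕ} (hp : p.Prime) (hsf : Squarefree E)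
    (hsq : IsSquare (p * E)) : p = E := by
  obtain ⟨k, hk⟩ := hsq
  obtain ⟨l, rfl⟩ : p ∣ k := hp.dvd_of_dvd_pow (n := 2) ⟨E, by rw [sq, ← hk]⟩
  have hE : E = p * (l * l) := by
    have := hp.pos
    nlinarith [hk]
  have hl : l = 1 := Nat.isUnit_iff.mp (hsf l ⟨p, by rw [hE]; ring⟩)
  simp [hE, hl]

theorem Real.sq_sqrt_natCast_eq_algebraMap (E : ℕ) : √(E : ℝ) ^ 2 = algebraMap ℚ ℝ E := by
  simp

theorem Nat.Prime.eq_of_sqrt_mem_adjoin_sqrt {p E : ℕ} (hp : p.Prime) (hE : 1 < E)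
    (hsf : Squarefree E) (h : √(p : ℝ) ∈ ℚ⟮√(E : ℝ)⟯) : p = E := by
  have hsqE : √(E : ℝ) ^ 2 = E := sq_sqrt E.cast_nonneg
  obtain ⟨a, b, hab⟩ :=
    exists_eq_add_mul_of_mem_adjoin_of_sq_eq_algebraMap (sq_sqrt_natCast_eq_algebraMap E) h
  simp only [eq_ratCast] at hab
  have hsq : (p : ℝ) = a ^ 2 + b ^ 2 * E + 2 * a * b * √E := by
    rw [← sq_sqrt p.cast_nonneg, hab]
    linear_combination b ^ 2 * hsqE
  -- `√E` is irrational, so the `√E`-part `2ab` of `p` vanishes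
  have hab0 : a * b = 0 := by
    by_contra hne
    refine Nat.irrational_sqrt_of_squarefree hE hsf
      ⟨(p - a ^ 2 - b ^ 2 * E) / (2 * (a * b)), ?_⟩
    have hne' : (a : ℝ) * b ≠ 0 := by exact_mod_cast hne
    push_cast
    rw [div_eq_iff (mul_ne_zero two_ne_zero hne')]
    linear_combination hsq
  rcases _root_.mul_eq_zero.mp hab0 with rfl | rfl
  · -- `√(pE) = bE` is rational, so `pE` is a perfect square
    refine hp.eq_of_isSquare_mul hsf
      (by_contra fun hns => irrational_sqrt_natCast_iff.mpr hns ⟨b * E, ?_⟩)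
    rw [Nat.cast_mul, sqrt_mul p.cast_nonneg, hab]
    push_cast
    linear_combination -b * hsqE
  · exact absurd ⟨a, by simp [hab]⟩ hp.irrational_sqrt

instance (E : ℕ) : FiniteDimensional ℚ ℚ⟮√(E : ℝ)⟯ :=
  adjoin.finiteDimensional (isIntegral_of_sq_eq_algebraMap (sq_sqrt_natCast_eq_algebraMap E))

theorem finrank_adjoin_sqrt_natCast_le_two (E : ℕ) : finrank ℚ ℚ⟮√(E : ℝ)⟯ ≤ 2 := by
  rw [adjoin.finrank (isIntegral_of_sq_eq_algebraMap (sq_sqrt_natCast_eq_algebraMap E))]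
  exact natDegree_minpoly_le_two_of_sq_eq_algebraMap (sq_sqrt_natCast_eq_algebraMap E)

theorem two_cos_mem_bot_or_mem_of_mem_adjoin_sqrt {n E : ℕ} (hn : 0 < n) (hE : 1 < E)
    (hsf : Squarefree E) (h : 2 * cos (2 * π / n) ∈ ℚ⟮√(E : ℝ)⟯) :
    2 * cos (2 * π / n) ∈ (⊥ : IntermediateField ℚ ℝ) ∨ E ∈ ({2, 3, 5} : Finset ℕ) := by
  have htot : n.totient ≤ 4 :=
    (Nat.totient_le_two_mul_finrank_of_two_cos_mem hn h).trans
      (by linarith [finrank_adjoin_sqrt_natCast_le_two E])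
  obtain ⟨p, hp, r, s, hrs⟩ :=
    two_cos_two_pi_div_eq_add_mul_sqrt (Nat.mem_of_totient_le_four hn htot)
  rcases eq_or_ne s 0 with rfl | hs
  · left
    rw [hrs, Rat.cast_zero, zero_mul, add_zero]
    exact SubfieldClass.ratCast_mem _ r
  · right
    have hpE : p = E := by
      refine Nat.Prime.eq_of_sqrt_mem_adjoin_sqrt ?_ hE hsf ?_
      · simp only [Finset.mem_insert, Finset.mem_singleton] at hp
        rcases hp with rfl | rfl | rfl <;> norm_num
      · have : √(p : ℝ) = (2 * cos (2 * π / n) - r) / s := by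
          rw [hrs]; field_simp; ring
        rw [this]
        exact div_mem (sub_mem h (SubfieldClass.ratCast_mem _ r)) (SubfieldClass.ratCast_mem _ s)
    exact hpE ▸ hp

/-- field-theoretic core of Lemma `trianglelem`: if the trace field
`ℚ(2cos(2π/n), 2cos(2π/m))` of a triangle group `Δ(n,m,∞)` equals a real quadratic field
`ℚ(√E)` with `E > 1` squarefree, then `E ∈ {2, 3, 5}`. -/
theorem stmt1 (n m : ℕ) (hn : 0 < n) (hm : 0 < m) (E : ℕ) (hE : 1 < E) (hsf : Squarefree E)
    (h : IntermediateField.adjoin ℚ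
        ({2 * Real.cos (2 * Real.pi / n), 2 * Real.cos (2 * Real.pi / m)} : Set ℝ) =
      IntermediateField.adjoin ℚ ({Real.sqrt E} : Set ℝ)) :
    E = 2 ∨ E = 3 ∨ E = 5 := by
  have hsub : ({2 * cos (2 * π / n), 2 * cos (2 * π / m)} : Set ℝ) ⊆ ℚ⟮√(E : ℝ)⟯ :=
    h ▸ subset_adjoin ℚ _
  suffices E ∈ ({2, 3, 5} : Finset ℕ) by simpa using this
  rcases two_cos_mem_bot_or_mem_of_mem_adjoin_sqrt hn hE hsf (hsub (Set.mem_insert _ _))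
    with hn_bot | hE'
  · rcases two_cos_mem_bot_or_mem_of_mem_adjoin_sqrt hm hE hsf
      (hsub (Set.mem_insert_of_mem _ rfl)) with hm_bot | hE'
    · have hbot : ℚ⟮√(E : ℝ)⟯ ≤ ⊥ := by
        rw [← h]
        exact adjoin_le_iff.mpr (Set.pair_subset hn_bot hm_bot)
      obtain ⟨q, hq⟩ := mem_bot.mp (hbot (mem_adjoin_simple_self ℚ _))
      exact absurd ⟨q, hq⟩ (Nat.irrational_sqrt_of_squarefree hE hsf)
    · exact hE'
  · exact hE'
end

section
/- Let p ≥ 3 be a prime, R a commutative ring of characteristic p, and g ∈ R[X] a polynomial of degree at most 5. For n ≥ 1 define B_{n,1}, B_{n,2}, C_{n,1}, C_{n,2} ∈ R as the coefficients of X^{pⁿ−1}, X^{2pⁿ−1}, X^{pⁿ−2}, X^{2pⁿ−2} respectively in g^{(pⁿ−1)/2}. Then for every n ≥ 1: B_{n+1,1} = B_{n,1}^p·B_{1,1} + C_{n,1}^p·B_{1,2}; B_{n+1,2} = B_{n,2}^p·B_{1,1} + C_{n,2}^p·B_{1,2}; C_{n+1,1} = B_{n,1}^p·C_{1,1} + C_{n,1}^p·C_{1,2};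 C_{n+1,2} = B_{n,2}^p·C_{1,1} + C_{n,2}^p·C_{1,2}. -/
/-- `B_{n,k}`: the coefficient of `X^{k·pⁿ−1}` in `g^{(pⁿ−1)/2}`. -/
noncomputable def Bcoef (p : ℕ) {R : Type*} [CommRing R] (g : Polynomial R) (n k : ℕ) : R :=
  (g ^ ((p ^ n - 1) / 2)).coeff (k * p ^ n - 1)

/-- `C_{n,k}`: the coefficient of `X^{k·pⁿ−2}` in `g^{(pⁿ−1)/2}`. -/
noncomputable def Ccoef (p : ℕ) {R : Type*} [CommRing R] (g : Polynomial R) (n k : ℕ) : R :=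
  (g ^ ((p ^ n - 1) / 2)).coeff (k * p ^ n - 2)

/-! Write `(pⁿ⁺¹ − 1)/2 = p·(pⁿ − 1)/2 + (p − 1)/2`, so that `g^{(pⁿ⁺¹−1)/2} = (g^{(pⁿ−1)/2})^p · G`
with `G = g^{(p−1)/2}`. In characteristic `p` the `p`-th power `h^p` only has coefficients
`h_i^p` at the indices `p·i`, while `deg G ≤ 5(p−1)/2 < 3p − 2`. Hence the coefficient of
`X^{pm−r}` (`r = 1, 2`) in `h^p · G` only receives contributions from `G_{p−r}` and `G_{2p−r}`,
namely `h_{m−1}^p G_{p−r} + h_{m−2}^p G_{2p−r}`. -/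

open Polynomial

theorem Nat.mul_sub_one_div_two_of_odd {p q : ℕ} (hp : Odd p) (hq : Odd q) :
    (p * q - 1) / 2 = p * ((q - 1) / 2) + (p - 1) / 2 := by
  obtain ⟨a, rfl⟩ := hp
  obtain ⟨b, rfl⟩ := hq
  rw [show (2 * a + 1) * (2 * b + 1) - 1 = 2 * ((2 * a + 1) * b + a) by
    rw [Nat.sub_eq_of_eq_add]; ring]
  simp only [Nat.add_sub_cancel, Nat.mul_div_cancel_left _ two_pos]

theorem Nat.not_dvd_mul_sub_sub {p m r c : ℕ} (hr : 0 < r) (hc : c < 3 * p - r)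
    (hcm : c + r ≤ p * m) (h₁ : c ≠ p - r) (h₂ : c ≠ 2 * p - r) : ¬ p ∣ p * m - r - c := by
  intro hdvd
  have hpm : p * m - r - c + (c + r) = p * m := by omega
  obtain ⟨q, hq⟩ : p ∣ c + r :=
    (Nat.dvd_add_right hdvd).mp (by rw [hpm]; exact dvd_mul_right p m)
  have hq3 : q < 3 := Nat.lt_of_mul_lt_mul_left (a := p) (by omega)
  interval_cases q <;> omega

namespace Polynomial

variable {R : Type*} [CommSemiring R] {p : ℕ} [ExpChar R p]

theorem coeff_pow_expChar (h : R[X]) (i : ℕ) :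
    (h ^ p).coeff i = if p ∣ i then h.coeff (i / p) ^ p else 0 := by
  rw [← map_frobenius_expand, coeff_map, coeff_expand (expChar_pos R p)]
  split_ifs <;> simp [frobenius_def, zero_pow (expChar_ne_zero R p)]

theorem coeff_pow_expChar_mul (h : R[X]) (i : ℕ) : (h ^ p).coeff (p * i) = h.coeff i ^ p := by
  rw [coeff_pow_expChar, if_pos (dvd_mul_right p i), Nat.mul_div_cancel_left i (expChar_pos R p)]

theorem coeff_pow_expChar_mul_of_natDegree_lt (h G : R[X]) {m r : ℕ} (hr : 0 < r) (hrp : r < p)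
    (hm : 2 ≤ m) (hG : G.natDegree < 3 * p - r) :
    (h ^ p * G).coeff (p * m - r)
      = h.coeff (m - 1) ^ p * G.coeff (p - r) + h.coeff (m - 2) ^ p * G.coeff (2 * p - r) := by
  have hpm := Nat.mul_le_mul_left p hm
  rw [mul_comm, coeff_mul, Finset.Nat.sum_antidiagonal_eq_sum_range_succ
    (fun i j => G.coeff i * (h ^ p).coeff j), Finset.sum_eq_add_of_mem (p - r) (2 * p - r) (Finset.mem_range.2 (by omega))
    (Finset.mem_range.2 (by omega)) (by omega)]
  · rw [show p * m - r - (p - r) = p * (m - 1) by rw [Nat.mul_sub_one]; omega,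
      show p * m - r - (2 * p - r) = p * (m - 2) by rw [Nat.mul_sub]; omega,
      coeff_pow_expChar_mul, coeff_pow_expChar_mul]
    ring
  · rintro c hc ⟨h₁, h₂⟩
    rw [Finset.mem_range] at hc
    by_cases hcG : c < 3 * p - r
    · rw [coeff_pow_expChar, if_neg (Nat.not_dvd_mul_sub_sub hr hcG (by omega) h₁ h₂), mul_zero]
    · rw [coeff_eq_zero_of_natDegree_lt (by omega), zero_mul]

end Polynomial

section

variable {R : Type*} [CommRing R] {p : ℕ} [ExpChar R p]

theorem coeff_pow_pow_succ_sub_one_div_two (hp : Odd p) (hp3 : 3 ≤ p) (g : R[X])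
    (hg : g.natDegree ≤ 5) {n k r : ℕ} (hn : n ≠ 0) (hk : k ≠ 0) (hr : 0 < r) (hr2 : r ≤ 2) :
    (g ^ ((p ^ (n + 1) - 1) / 2)).coeff (k * p ^ (n + 1) - r)
      = (g ^ ((p ^ n - 1) / 2)).coeff (k * p ^ n - 1) ^ p * (g ^ ((p - 1) / 2)).coeff (p - r)
      + (g ^ ((p ^ n - 1) / 2)).coeff (k * p ^ n - 2) ^ p
        * (g ^ ((p - 1) / 2)).coeff (2 * p - r) := by
  have hdeg : (g ^ ((p - 1) / 2)).natDegree < 3 * p - r :=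
    natDegree_pow_le.trans_lt ((Nat.mul_le_mul_left _ hg).trans_lt (by omega))
  have hm : 2 ≤ k * p ^ n := by
    have := Nat.le_self_pow hn p
    nlinarith [Nat.pos_of_ne_zero hk]
  rw [pow_succ' p n, Nat.mul_sub_one_div_two_of_odd hp hp.pow, pow_add, pow_mul',
    show k * (p * p ^ n) = p * (k * p ^ n) by ring,
    coeff_pow_expChar_mul_of_natDegree_lt _ _ hr (by omega) hm hdeg]

theorem Bcoef_succ (hp : Odd p) (hp3 : 3 ≤ p) (g : R[X]) (hg : g.natDegree ≤ 5) {n k : ℕ}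
    (hn : n ≠ 0) (hk : k ≠ 0) :
    Bcoef p g (n + 1) k
      = Bcoef p g n k ^ p * Bcoef p g 1 1 + Ccoef p g n k ^ p * Bcoef p g 1 2 := by
  simpa only [Bcoef, Ccoef, pow_one, one_mul]
    using coeff_pow_pow_succ_sub_one_div_two hp hp3 g hg hn hk one_pos one_le_two

theorem Ccoef_succ (hp : Odd p) (hp3 : 3 ≤ p) (g : R[X]) (hg : g.natDegree ≤ 5) {n k : ℕ}
    (hn : n ≠ 0) (hk : k ≠ 0) :
    Ccoef p g (n + 1) k
      = Bcoef p g n k ^ p * Ccoef p g 1 1 + Ccoef p g n k ^ p * Ccoef p g 1 2 := by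
  simpa only [Bcoef, Ccoef, pow_one, one_mul]
    using coeff_pow_pow_succ_sub_one_div_two hp hp3 g hg hn hk two_pos le_rfl

end

/-- the identity underlying Lemma `congruencelem`: for an odd prime `p`, a
commutative ring `R` of characteristic `p`, and `g ∈ R[X]` of degree at most `5`, the
expansion coefficients `B_{n,k}`, `C_{n,k}` of `g^{(pⁿ−1)/2}` satisfy the Frobenius-type
recursions. -/
theorem stmt11 (p : ℕ) (hp : p.Prime) (hp3 : 3 ≤ p) (R : Type*) [CommRing R] [CharP R p]
    (g : Polynomial R) (hg : g.natDegree ≤ 5) :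
    ∀ n : ℕ, 1 ≤ n →
      Bcoef p g (n + 1) 1 = Bcoef p g n 1 ^ p * Bcoef p g 1 1
          + Ccoef p g n 1 ^ p * Bcoef p g 1 2 ∧
      Bcoef p g (n + 1) 2 = Bcoef p g n 2 ^ p * Bcoef p g 1 1
          + Ccoef p g n 2 ^ p * Bcoef p g 1 2 ∧
      Ccoef p g (n + 1) 1 = Bcoef p g n 1 ^ p * Ccoef p g 1 1
          + Ccoef p g n 1 ^ p * Ccoef p g 1 2 ∧
      Ccoef p g (n + 1) 2 = Bcoef p g n 2 ^ p * Ccoef p g 1 1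
          + Ccoef p g n 2 ^ p * Ccoef p g 1 2 := by
  intro n hn
  have : ExpChar R p := ExpChar.prime hp
  have hodd : Odd p := hp.odd_of_ne_two (by omega)
  have hn0 : n ≠ 0 := by omega
  exact ⟨Bcoef_succ hodd hp3 g hg hn0 one_ne_zero, Bcoef_succ hodd hp3 g hg hn0 two_ne_zero,
    Ccoef_succ hodd hp3 g hg hn0 one_ne_zero, Ccoef_succ hodd hp3 g hg hn0 two_ne_zero⟩
end

section
/- Let s₀ = (1023 − 217√17)/128 ∈ ℝ, let λ = (−1 − s₀)/(1 − s₀), and let j = 256·(λ² − λ + 1)³/(λ²(λ − 1)²). Then j is not a rational number. -/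
/-!
Since `217 √17 ≠ 895`, the cross-ratio simplifies to `λ = (897 + 217 √17) / 2`, a root of
`x² − 897 x + 1024`. Reducing `j` modulo this quadratic leaves the affine expression
`j = (939458751 λ − 1012056319) / 4096`, so `j` is irrational because `λ`, and hence `√17`, is.
-/

/-- `s₀ = (1023 − 217√17)/128`, the image of the fifth marked point under `τ ↦ (τ²+1)/(2τ)`. -/
noncomputable def s₀ : ℝ := (1023 - 217 * Real.sqrt 17) / 128

/-- The cross-ratio `λ` of the four marked points `(1, −1, ∞, s₀)`. -/
noncomputable def lam : ℝ := (-1 - s₀) / (1 - s₀)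

/-- The `j`-invariant of the four-point configuration. -/
noncomputable def jInv : ℝ := 256 * (lam ^ 2 - lam + 1) ^ 3 / (lam ^ 2 * (lam - 1) ^ 2)

lemma lam_eq : lam = (897 + 217 * √17) / 2 := by
  have h17 : √17 ^ 2 = 17 := Real.sq_sqrt (by norm_num)
  have hs₀ : 1 - s₀ ≠ 0 := by
    intro h
    have : 217 * √17 = 895 := by unfold s₀ at h; linarith
    nlinarith
  rw [lam, div_eq_iff hs₀, s₀]
  linear_combination (-47089 / 256 : ℝ) * h17

lemma irrational_lam : Irrational lam := by
  have h17 : Irrational √17 := by exact_mod_cast (by norm_num : Nat.Prime 17).irrational_sqrt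
  have := (h17.natCast_mul (m := 217) (by norm_num)).natCast_add 897
  rw [lam_eq]
  exact_mod_cast this.div_natCast (m := 2) (by norm_num)

lemma lam_sq : lam ^ 2 = 897 * lam - 1024 := by
  rw [lam_eq]
  linear_combination (47089 / 4 : ℝ) * Real.sq_sqrt (show (0 : ℝ) ≤ 17 by norm_num)

lemma one_lt_lam : 1 < lam := by
  rw [lam_eq]
  linarith [Real.sqrt_nonneg 17]

lemma jInv_eq : jInv = (939458751 * lam - 1012056319) / 4096 := by
  have hlam := one_lt_lam
  have hden : lam ^ 2 * (lam - 1) ^ 2 ≠ 0 := by positivity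
  rw [jInv, div_eq_div_iff hden (by norm_num)]
  linear_combination
    (1048576 * lam ^ 4 - 2031807 * lam ^ 3 + 992574 * lam ^ 2 - 2175 * lam + 1024) * lam_sq

lemma irrational_jInv : Irrational jInv := by
  have := (irrational_lam.natCast_mul (m := 939458751) (by norm_num)).sub_natCast 1012056319
  rw [jInv_eq]
  exact_mod_cast this.div_natCast (m := 4096) (by norm_num)

/-- Corollary `fomcor`: the `j`-invariant of the configuration
`Σ = {1, −1, ∞, (τ²+1)/2τ}` of cusps and the elliptic point of `W₁₇^ε` is not a rational
number; hence `(W̄₁₇^ε, Σ)` cannot be defined over `ℚ`. -/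
theorem stmt16 : ¬ ∃ q : ℚ, (q : ℝ) = jInv := irrational_jInv
end
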